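/- arXiv:2005.06347 — 2 statements merged into one kernel-verified Lean document; each statement's English description precedes it below -/
import Mathlib

section
/- Let d ≥ 1, α ∈ (1,2), and let ν be a symmetric α-stable Lévy measure on ℝ^d whose associated α-stable probability measure μ has characteristic function μ̂(ξ) = exp(−‖ξ‖^α/2) (the rotationally invariant normalization). Then for every ξ ∈ ℝ^d with ξ ≠ 0, the ℂ^d-valued Bochner integral τ_α(ξ) = ∫_{ℝ^d} u (e^{i⟨u,ξ⟩} − 1) ν(du) equals (iα/2) ‖ξ‖^{α−2} ξ. -/
noncomputable section

open MeasureTheory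
open scoped InnerProductSpace
open scoped ENNReal BoundedContinuousFunction

abbrev Ed (d : ℕ) := EuclideanSpace ℝ (Fin d)

/-- A symmetric `α`-stable Lévy measure on `ℝ^d`. -/
def IsStableLevy (d : ℕ) (α : ℝ) (ν : Measure (Ed d)) : Prop :=
  ν {0} = 0 ∧
  (∫⁻ u, ENNReal.ofReal (min 1 (‖u‖ ^ 2)) ∂ν) < ⊤ ∧
  Measure.map (fun u => -u) ν = ν ∧
  ∀ c : ℝ, 0 < c → Measure.map (fun u : Ed d => c • u) ν = ENNReal.ofReal (c ^ α) • ν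

/-- The characteristic function of a measure on `ℝ^d`. -/
def charFn (d : ℕ) (μ : Measure (Ed d)) (ξ : Ed d) : ℂ :=
  ∫ y, Complex.exp ((⟪y, ξ⟫_ℝ : ℂ) * Complex.I) ∂μ

/-- `μ` is the `α`-stable probability measure associated with the Lévy measure `ν`. -/
def IsStableOf (d : ℕ) (ν μ : Measure (Ed d)) : Prop :=
  IsProbabilityMeasure μ ∧
  ∀ ξ : Ed d, charFn d μ ξ =
    Complex.exp (∫ u, (Complex.exp ((⟪u, ξ⟫_ℝ : ℂ) * Complex.I) - 1 -
      (⟪u, ξ⟫_ℝ : ℂ) * Complex.I) ∂ν)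

/-- `l1` is a spectral measure of `μ`, witnessing non-degeneracy. -/
def IsSpectral (d : ℕ) (α : ℝ) (l1 μ : Measure (Ed d)) : Prop :=
  IsFiniteMeasure l1 ∧
  l1 {x | ‖x‖ ≠ 1} = 0 ∧
  Measure.map (fun x : Ed d => -x) l1 = l1 ∧
  (∃ ε : ℝ, 0 < ε ∧ ∀ z : Ed d, ‖z‖ = 1 → ε ≤ ∫ x, |⟪z, x⟫_ℝ| ^ α ∂l1) ∧
  ∀ ξ : Ed d, charFn d μ ξ = Complex.exp (-((∫ y, |⟪ξ, y⟫_ℝ| ^ α ∂l1 : ℝ) : ℂ))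

/-- The stable heat semigroup. -/
def heatSG (d : ℕ) (α : ℝ) (μ : Measure (Ed d)) (t : ℝ) (f : Ed d → ℝ) (x : Ed d) : ℝ :=
  ∫ y, f (x + t ^ (1/α) • y) ∂μ

/-- The stable Ornstein–Uhlenbeck semigroup. -/
def ouSG (d : ℕ) (α : ℝ) (μ : Measure (Ed d)) (t : ℝ) (f : Ed d → ℝ) (x : Ed d) : ℝ :=
  ∫ y, f (Real.exp (-t) • x + (1 - Real.exp (-(α * t))) ^ (1/α) • y) ∂μ

/-- Complexification of a vector of `ℝ^d`. -/
def toC (d : ℕ) (u : Ed d) : EuclideanSpace ℂ (Fin d) := WithLp.toLp 2 (fun j => (u j : ℂ))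

/-- Gamma transform of order `r` of the stable heat semigroup. -/
def gammaHeat (d : ℕ) (α r : ℝ) (μ : Measure (Ed d)) (f : Ed d → ℝ) (x : Ed d) : ℝ :=
  (1 / Real.Gamma (r / 2)) *
    ∫ t in Set.Ioi (0:ℝ), Real.exp (-t) * t ^ (r/2 - 1) * heatSG d α μ t f x

/-- Gamma transform of order `r` of the stable Ornstein–Uhlenbeck semigroup. -/
def gammaOU (d : ℕ) (α r : ℝ) (μ : Measure (Ed d)) (f : Ed d → ℝ) (x : Ed d) : ℝ :=
  (1 / Real.Gamma (r / 2)) *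
    ∫ t in Set.Ioi (0:ℝ), Real.exp (-t) * t ^ (r/2 - 1) * ouSG d α μ t f x

/-- Fourier transform with the convention `𝓕f(ξ) = ∫ f(x) e^{−i⟨x,ξ⟩} dx`. -/
def FT (d : ℕ) (g : Ed d → ℂ) (ξ : Ed d) : ℂ :=
  ∫ x, g x * Complex.exp (-((⟪x, ξ⟫_ℝ : ℂ) * Complex.I))

/-- Inverse Fourier transform `(2π)^{-d} ∫ g(ξ) e^{i⟨ξ,x⟩} dξ`. -/
def IFT (d : ℕ) (g : Ed d → ℂ) (x : Ed d) : ℂ :=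
  (((2 * Real.pi) ^ d : ℝ) : ℂ)⁻¹ * ∫ ξ, g ξ * Complex.exp ((⟪ξ, x⟫_ℝ : ℂ) * Complex.I)

open Classical in
/-- The multiplier of `D_j^{α-1,rot} ∘ (E - A_α^{rot})^{-r/2}`. -/
def mj (d : ℕ) (α r : ℝ) (j : Fin d) (ξ : Ed d) : ℂ :=
  if ξ = 0 then 0 else
    (Complex.I * (α : ℂ) / 2) * ((ξ j / ‖ξ‖ : ℝ) : ℂ) *
      ((2 ^ (r/2) * ‖ξ‖ ^ (α - 1) / (2 + ‖ξ‖ ^ α) ^ (r/2) : ℝ) : ℂ)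

/-- The symbol `ρ_{α,r}`. -/
def rho (α r : ℝ) (ξ : ℝ) : ℂ :=
  2 * Complex.I * (α : ℂ) *
    ((∫ t in Set.Ioi (0:ℝ), Real.exp (-(t ^ α)) * t ^ (α * r / 2 - α) * Real.sin (ξ * t) : ℝ) : ℂ)

/-- The constant `C_{α,p,r}`. -/
def Cconst (C α p r : ℝ) : ℝ :=
  C / (2 * Real.Gamma (r / 2)) * max p (p - 1)⁻¹ *
    max ((1 - α * (1 - r / 2)) * Real.Gamma (1/α - 1 + r/2) + α * Real.Gamma (r/2 + 1/α))
      (⨆ ξ : ℝ, ‖rho α r ξ‖)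

/-- The one-dimensional stable Lévy constant. -/
def cA (α : ℝ) : ℝ := -α * (α - 1) / (4 * Real.Gamma (2 - α) * Real.cos (α * Real.pi / 2))

/-- The one-dimensional symmetric `α`-stable Lévy measure `c_α |u|^{-α-1} du`. -/
def nu1 (α : ℝ) : Measure ℝ :=
  MeasureTheory.volume.withDensity fun u => ENNReal.ofReal (cA α * |u| ^ (-α - 1))

/-- The `α`-stable Lévy measure on `ℝ^d` concentrated on the coordinate axes. -/
def nuD (d : ℕ) (α : ℝ) : Measure (Ed d) :=
  ∑ k : Fin d, Measure.map (fun u : ℝ => u • EuclideanSpace.single k (1:ℝ)) (nu1 α)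

/-- The symbol `τ_α` of the fractional gradient. -/
def tauA (d : ℕ) (ν : Measure (Ed d)) (ξ : Ed d) : EuclideanSpace ℂ (Fin d) :=
  ∫ u, (Complex.exp ((⟪u, ξ⟫_ℝ : ℂ) * Complex.I) - 1) • toC d u ∂ν

/-- The symbol `ψ_α` of the negative of the stable generator. -/
def psiA (d : ℕ) (α : ℝ) (l1 : Measure (Ed d)) (ξ : Ed d) : ℝ :=
  ∫ y, |⟪ξ, y⟫_ℝ| ^ α ∂l1

open Classical in
/-- The homogeneous fractional Riesz transform `D^{α-1} ∘ (−A_α)^{-(α-1)/α}`. -/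
def rieszT (d : ℕ) (α : ℝ) (ν l1 : Measure (Ed d)) (f : Ed d → ℂ) (x : Ed d) :
    EuclideanSpace ℂ (Fin d) :=
  (((2 * Real.pi) ^ d : ℝ)⁻¹) •
    ∫ ξ, (FT d f ξ * Complex.exp ((⟪ξ, x⟫_ℝ : ℂ) * Complex.I)) •
      (if ξ = 0 then 0 else ((psiA d α l1 ξ ^ ((α - 1)/α))⁻¹ : ℝ) • tauA d ν ξ)

/-!
Put `Φ(ξ) = ∫ (e^{i⟪u, ξ⟫} - 1 - i⟪u, ξ⟫) dν(u)`. Since `ν` is symmetric, `Φ` is real, so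
`exp Φ = μ̂ = exp (-‖ξ‖^α / 2)` forces `Φ(ξ) = -‖ξ‖^α / 2`. The scaling of `ν` gives
`ν {‖u‖ > c} = c^{-α} ν {‖u‖ > 1}`, so for `α > 1` the function `min ‖u‖ ‖u‖²` is `ν`-integrable.
It dominates the integrand of `Φ` and its derivative `(e^{i⟪u, ξ⟫} - 1) i⟪u, ·⟫` locally
uniformly in `ξ`, so `Φ` can be differentiated under the integral sign; comparing with the
gradient `-(α/2) ‖ξ‖^{α-2} ξ` of `-‖ξ‖^α / 2` gives `τ_α(ξ)` coordinatewise.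
-/

open Complex
open scoped ComplexConjugate

lemma norm_cexp_ofReal_mul_I_sub_one_le (x : ℝ) : ‖cexp (x * I) - 1‖ ≤ min 2 |x| := by
  refine le_min ?_ ?_
  · calc ‖cexp (x * I) - 1‖ ≤ ‖cexp (x * I)‖ + ‖(1 : ℂ)‖ := norm_sub_le _ _
      _ = 2 := by rw [norm_exp_ofReal_mul_I, norm_one]; norm_num
  · simpa [mul_comm] using Real.norm_exp_I_mul_ofReal_sub_one_le (x := x)

lemma norm_cexp_ofReal_mul_I_sub_one_sub_le (x : ℝ) :
    ‖cexp (x * I) - 1 - x * I‖ ≤ 2 * min |x| (x ^ 2) := by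
  have hxI : ‖(x : ℂ) * I‖ = |x| := by simp
  rcases le_or_gt |x| 1 with hx | hx
  · have h := norm_exp_sub_one_sub_id_le (x := x * I) (hxI ▸ hx)
    rw [hxI, sq_abs] at h
    rw [min_eq_right (by nlinarith [abs_nonneg x, sq_abs x])]
    nlinarith [sq_nonneg x]
  · rw [min_eq_left (by nlinarith [sq_abs x])]
    calc ‖cexp (x * I) - 1 - x * I‖ ≤ ‖cexp (x * I) - 1‖ + ‖(x : ℂ) * I‖ := norm_sub_le _ _
      _ ≤ |x| + |x| := by
        rw [hxI]; gcongr; exact (norm_cexp_ofReal_mul_I_sub_one_le x).trans (min_le_right _ _)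
      _ = 2 * |x| := by ring

lemma min_mul_le_max_mul_min {a b c e : ℝ} (hb : 0 ≤ b) (he : 0 ≤ e) :
    min (a * b) (c * e) ≤ max a c * min b e := by
  rcases le_total b e with h | h
  · rw [min_eq_left h]
    exact (min_le_left _ _).trans (mul_le_mul_of_nonneg_right (le_max_left _ _) hb)
  · rw [min_eq_right h]
    exact (min_le_right _ _).trans (mul_le_mul_of_nonneg_right (le_max_right _ _) he)

lemma eq_ofReal_of_conj_eq_of_exp_eq {z : ℂ} {r : ℝ} (hz : conj z = z) (h : cexp z = cexp r) :
    z = r := by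
  obtain ⟨x, rfl⟩ := conj_eq_iff_real.mp hz
  rw [← ofReal_exp, ← ofReal_exp, ofReal_inj, Real.exp_eq_exp] at h
  rw [h]

open Set

lemma setLIntegral_Ioi_one_lt_top_of_tail_le {ρ : Measure ℝ} {C q : ℝ≥0∞} (hC : C ≠ ⊤)
    (hq : 2 * q < 1) (htail : ∀ n : ℕ, ρ (Ioi (2 ^ n)) ≤ C * q ^ n) :
    ∫⁻ t in Ioi 1, ENNReal.ofReal t ∂ρ < ⊤ := by
  have hmono : Monotone fun n : ℕ => (2 : ℝ) ^ n := pow_right_mono₀ one_le_two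
  have hunbdd : ¬BddAbove (range fun n : ℕ => (2 : ℝ) ^ n) := by
    rw [not_bddAbove_iff]
    intro x
    obtain ⟨n, hn⟩ := pow_unbounded_of_one_lt x one_lt_two
    exact ⟨_, mem_range_self n, hn⟩
  have hunion : ⋃ n : ℕ, Ioc ((2 : ℝ) ^ n) (2 ^ (n + 1)) = Ioi 1 := by
    simpa using iUnion_Ioc_map_succ_eq_Ioi (fun n => hmono (Nat.zero_le n)) hunbdd
  have hterm (n : ℕ) :
      ∫⁻ t in Ioc ((2 : ℝ) ^ n) (2 ^ (n + 1)), ENNReal.ofReal t ∂ρ ≤ 2 * C * (2 * q) ^ n :=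
    calc ∫⁻ t in Ioc ((2 : ℝ) ^ n) (2 ^ (n + 1)), ENNReal.ofReal t ∂ρ
        ≤ ∫⁻ _ in Ioc ((2 : ℝ) ^ n) (2 ^ (n + 1)), 2 ^ (n + 1) ∂ρ :=
          setLIntegral_mono measurable_const fun t ht => by
            simpa using ENNReal.ofReal_le_ofReal ht.2
      _ = 2 ^ (n + 1) * ρ (Ioc (2 ^ n) (2 ^ (n + 1))) := setLIntegral_const _ _
      _ ≤ 2 ^ (n + 1) * (C * q ^ n) := by
          gcongr; exact (measure_mono Ioc_subset_Ioi_self).trans (htail n)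
      _ = 2 * C * (2 * q) ^ n := by ring
  have hdisj :
      Pairwise (Function.onFun Disjoint fun n : ℕ => Ioc ((2 : ℝ) ^ n) (2 ^ (n + 1))) := by
    simpa using hmono.pairwise_disjoint_on_Ioc_succ
  rw [← hunion, lintegral_iUnion (fun n => measurableSet_Ioc) hdisj]
  calc ∑' n, ∫⁻ t in Ioc ((2 : ℝ) ^ n) (2 ^ (n + 1)), ENNReal.ofReal t ∂ρ
      ≤ ∑' n : ℕ, 2 * C * (2 * q) ^ n := ENNReal.tsum_le_tsum hterm
    _ = 2 * C * (1 - 2 * q)⁻¹ := by rw [ENNReal.tsum_mul_left, ENNReal.tsum_geometric]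
    _ < ⊤ := ENNReal.mul_lt_top (ENNReal.mul_lt_top (by norm_num) hC.lt_top)
        (ENNReal.inv_lt_top.mpr (tsub_pos_of_lt hq))

section Scaling

variable {E : Type*} [NormedAddCommGroup E] [NormedSpace ℝ E] [MeasurableSpace E] [BorelSpace E]
  {ν : Measure E} {α : ℝ}

lemma measure_norm_gt_eq_of_map_smul
    (hscale : ∀ c : ℝ, 0 < c → Measure.map (fun u : E => c • u) ν = ENNReal.ofReal (c ^ α) • ν)
    {c : ℝ} (hc : 0 < c) :
    ν {u | c < ‖u‖} = ENNReal.ofReal (c ^ (-α)) * ν {u | 1 < ‖u‖} := by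
  have hpre : (fun u : E => c • u) ⁻¹' {u | c < ‖u‖} = {u | 1 < ‖u‖} := by
    ext u
    simp [norm_smul, abs_of_pos hc, hc]
  have h := congrArg (· {u : E | c < ‖u‖}) (hscale c hc)
  simp only [Measure.map_apply (continuous_const_smul c).measurable
    (measurableSet_lt measurable_const measurable_norm), hpre, Measure.smul_apply,
    smul_eq_mul] at h
  rw [h, ← mul_assoc, ← ENNReal.ofReal_mul (by positivity), ← Real.rpow_add hc,
    neg_add_cancel, Real.rpow_zero, ENNReal.ofReal_one, one_mul]

lemma integrableOn_norm_of_map_smul (hα : 1 < α)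
    (hscale : ∀ c : ℝ, 0 < c → Measure.map (fun u : E => c • u) ν = ENNReal.ofReal (c ^ α) • ν)
    (hM : ν {u | 1 < ‖u‖} ≠ ⊤) :
    IntegrableOn (fun u => ‖u‖) {u | 1 < ‖u‖} ν := by
  refine ⟨measurable_norm.aestronglyMeasurable,
    (hasFiniteIntegral_iff_ofReal (ae_of_all _ fun u => norm_nonneg u)).2 ?_⟩
  have hq : 2 * ENNReal.ofReal (2 ^ (-α)) < 1 := by
    rw [← ENNReal.ofReal_ofNat, ← ENNReal.ofReal_mul zero_le_two, ENNReal.ofReal_lt_one,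
      ← Real.rpow_one_add' zero_le_two (by linarith)]
    exact Real.rpow_lt_one_of_one_lt_of_neg one_lt_two (by linarith)
  have htail (n : ℕ) : Measure.map (fun u : E => ‖u‖) ν (Ioi (2 ^ n)) ≤
      ν {u | 1 < ‖u‖} * ENNReal.ofReal (2 ^ (-α)) ^ n := by
    rw [Measure.map_apply measurable_norm measurableSet_Ioi,
      show (fun u : E => ‖u‖) ⁻¹' Ioi (2 ^ n) = {u | 2 ^ n < ‖u‖} from rfl,
      measure_norm_gt_eq_of_map_smul hscale (by positivity), mul_comm,
      ← ENNReal.ofReal_pow (by positivity), ← Real.rpow_pow_comm zero_le_two]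
  have h := setLIntegral_Ioi_one_lt_top_of_tail_le hM hq htail
  rwa [setLIntegral_map measurableSet_Ioi ENNReal.measurable_ofReal measurable_norm] at h

lemma integrable_min_norm_sq_of_map_smul (hα : 1 < α)
    (hscale : ∀ c : ℝ, 0 < c → Measure.map (fun u : E => c • u) ν = ENNReal.ofReal (c ^ α) • ν)
    (hfin : ∫⁻ u, ENNReal.ofReal (min 1 (‖u‖ ^ 2)) ∂ν < ⊤) :
    Integrable (fun u => min ‖u‖ (‖u‖ ^ 2)) ν := by
  have hsmall : Integrable (fun u => min 1 (‖u‖ ^ 2)) ν :=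
    ⟨(by fun_prop : Continuous fun u : E => min 1 (‖u‖ ^ 2)).aestronglyMeasurable,
      (hasFiniteIntegral_iff_ofReal (ae_of_all _ fun u => by positivity)).2 hfin⟩
  have hM : ν {u | 1 < ‖u‖} ≠ ⊤ := by
    refine ne_top_of_le_ne_top hfin.ne ((measure_mono fun u hu => ?_).trans
      (one_mul (ν {u | 1 ≤ ENNReal.ofReal (min 1 (‖u‖ ^ 2))}) ▸
        mul_meas_ge_le_lintegral₀ (by fun_prop) 1))
    simp only [mem_ofPred_eq] at hu ⊢
    rw [min_eq_left (by nlinarith), ENNReal.ofReal_one]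
  have hlarge := (integrableOn_norm_of_map_smul hα hscale hM).integrable_indicator
    (measurableSet_lt measurable_const measurable_norm)
  refine (hsmall.add hlarge).mono'
    (by fun_prop : Continuous fun u : E => min ‖u‖ (‖u‖ ^ 2)).aestronglyMeasurable
    (ae_of_all _ fun u => ?_)
  rw [Real.norm_of_nonneg (by positivity), Pi.add_apply]
  by_cases hu : 1 < ‖u‖
  · rw [indicator_of_mem (by exact hu)]
    linarith [min_le_left ‖u‖ (‖u‖ ^ 2), le_min zero_le_one (sq_nonneg ‖u‖)]
  · rw [indicator_of_notMem (by exact hu), add_zero]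
    exact le_min ((min_le_left _ _).trans (not_lt.mp hu)) (min_le_right _ _)

end Scaling

lemma IsStableLevy.integrable_min_norm_sq {d : ℕ} {α : ℝ} {ν : Measure (Ed d)}
    (hν : IsStableLevy d α ν) (hα : 1 < α) :
    Integrable (fun u => min ‖u‖ (‖u‖ ^ 2)) ν :=
  integrable_min_norm_sq_of_map_smul hα hν.2.2.2 hν.2.1

section LevyIntegrand

variable {E : Type*} [NormedAddCommGroup E] [InnerProductSpace ℝ E]

def levyIntegrand (ξ u : E) : ℂ := cexp (⟪u, ξ⟫_ℝ * I) - 1 - ⟪u, ξ⟫_ℝ * I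

def levyIntegrandFDeriv (ξ u : E) : E →L[ℝ] ℂ :=
  ((cexp (⟪u, ξ⟫_ℝ * I) - 1) * I) • ofRealCLM.comp (innerSL ℝ u)

lemma levyIntegrandFDeriv_apply (ξ u v : E) :
    levyIntegrandFDeriv ξ u v = (cexp (⟪u, ξ⟫_ℝ * I) - 1) * I * ⟪u, v⟫_ℝ :=
  rfl

lemma hasFDerivAt_levyIntegrand (ξ u : E) :
    HasFDerivAt (levyIntegrand · u) (levyIntegrandFDeriv ξ u) ξ := by
  have hlin : HasFDerivAt (fun x : E => (⟪u, x⟫_ℝ : ℂ) * I)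
      (I • ofRealCLM.comp (innerSL ℝ u)) ξ :=
    (ofRealCLM.comp (innerSL ℝ u)).hasFDerivAt.mul_const I
  have h := (((hasDerivAt_exp _).comp_hasFDerivAt ξ hlin).sub_const 1).sub hlin
  refine h.congr_fderiv (ContinuousLinearMap.ext fun v => ?_)
  simp only [levyIntegrandFDeriv_apply, sub_apply, smul_apply, smul_eq_mul,
    ContinuousLinearMap.coe_comp, Function.comp_apply, innerSL_apply_apply, ofRealCLM_apply]
  ring

lemma norm_levyIntegrand_le (ξ u : E) :
    ‖levyIntegrand ξ u‖ ≤ 2 * max ‖ξ‖ (‖ξ‖ ^ 2) * min ‖u‖ (‖u‖ ^ 2) := by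
  have hx : |⟪u, ξ⟫_ℝ| ≤ ‖ξ‖ * ‖u‖ := (abs_real_inner_le_norm u ξ).trans_eq (mul_comm _ _)
  calc ‖levyIntegrand ξ u‖ ≤ 2 * min |⟪u, ξ⟫_ℝ| (⟪u, ξ⟫_ℝ ^ 2) :=
        norm_cexp_ofReal_mul_I_sub_one_sub_le _
    _ ≤ 2 * min (‖ξ‖ * ‖u‖) (‖ξ‖ ^ 2 * ‖u‖ ^ 2) := by
        rw [← sq_abs (⟪u, ξ⟫_ℝ), ← mul_pow]
        gcongr
    _ ≤ 2 * (max ‖ξ‖ (‖ξ‖ ^ 2) * min ‖u‖ (‖u‖ ^ 2)) := by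
        gcongr; exact min_mul_le_max_mul_min (norm_nonneg u) (by positivity)
    _ = 2 * max ‖ξ‖ (‖ξ‖ ^ 2) * min ‖u‖ (‖u‖ ^ 2) := by ring

lemma norm_cexp_inner_sub_one_mul_norm_le (ξ u : E) :
    ‖cexp (⟪u, ξ⟫_ℝ * I) - 1‖ * ‖u‖ ≤ max 2 ‖ξ‖ * min ‖u‖ (‖u‖ ^ 2) := by
  have hx : |⟪u, ξ⟫_ℝ| ≤ ‖ξ‖ * ‖u‖ := (abs_real_inner_le_norm u ξ).trans_eq (mul_comm _ _)
  calc ‖cexp (⟪u, ξ⟫_ℝ * I) - 1‖ * ‖u‖ ≤ min 2 (‖ξ‖ * ‖u‖) * ‖u‖ := by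
        gcongr
        exact (norm_cexp_ofReal_mul_I_sub_one_le _).trans (min_le_min_left _ hx)
    _ = min (2 * ‖u‖) (‖ξ‖ * ‖u‖ ^ 2) := by
        rw [min_mul_of_nonneg _ _ (norm_nonneg u)]; ring_nf
    _ ≤ max 2 ‖ξ‖ * min ‖u‖ (‖u‖ ^ 2) := min_mul_le_max_mul_min (norm_nonneg u) (by positivity)

lemma norm_levyIntegrandFDeriv_le (ξ u : E) :
    ‖levyIntegrandFDeriv ξ u‖ ≤ max 2 ‖ξ‖ * min ‖u‖ (‖u‖ ^ 2) := by
  refine (ContinuousLinearMap.opNorm_le_bound _ (by positivity) fun v => ?_).trans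
    (norm_cexp_inner_sub_one_mul_norm_le ξ u)
  rw [levyIntegrandFDeriv_apply, norm_mul, norm_mul, norm_I, mul_one, norm_real, mul_assoc]
  gcongr
  exact abs_real_inner_le_norm u v

lemma levyIntegrand_neg (ξ u : E) : levyIntegrand ξ (-u) = conj (levyIntegrand ξ u) := by
  simp only [levyIntegrand, inner_neg_left, ofReal_neg, map_sub, map_mul, map_one, conj_ofReal,
    conj_I, ← exp_conj]
  ring_nf

lemma continuous_levyIntegrand (ξ : E) : Continuous (levyIntegrand ξ) := by
  unfold levyIntegrand; fun_prop

lemma continuous_levyIntegrandFDeriv (ξ : E) : Continuous (levyIntegrandFDeriv ξ) := by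
  unfold levyIntegrandFDeriv; fun_prop

variable [MeasurableSpace E] [BorelSpace E] {ν : Measure E}

lemma integrable_levyIntegrand (hν : Integrable (fun u => min ‖u‖ (‖u‖ ^ 2)) ν) (ξ : E) :
    Integrable (levyIntegrand ξ) ν :=
  (hν.const_mul _).mono' (continuous_levyIntegrand ξ).aestronglyMeasurable
    (ae_of_all _ (norm_levyIntegrand_le ξ))

lemma conj_integral_levyIntegrand (hsymm : Measure.map (fun u => -u) ν = ν) (ξ : E) :
    conj (∫ u, levyIntegrand ξ u ∂ν) = ∫ u, levyIntegrand ξ u ∂ν := by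
  conv_rhs => rw [← hsymm]
  rw [← integral_conj, integral_map measurable_neg.aemeasurable
    (hsymm ▸ (continuous_levyIntegrand ξ).aestronglyMeasurable)]
  simp only [levyIntegrand_neg]

variable [SecondCountableTopology E]

lemma integrable_levyIntegrandFDeriv (hν : Integrable (fun u => min ‖u‖ (‖u‖ ^ 2)) ν) (ξ : E) :
    Integrable (levyIntegrandFDeriv ξ) ν :=
  (hν.const_mul _).mono' (continuous_levyIntegrandFDeriv ξ).aestronglyMeasurable
    (ae_of_all _ (norm_levyIntegrandFDeriv_le ξ))

lemma hasFDerivAt_integral_levyIntegrand (hν : Integrable (fun u => min ‖u‖ (‖u‖ ^ 2)) ν)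
    (ξ : E) :
    HasFDerivAt (fun x => ∫ u, levyIntegrand x u ∂ν) (∫ u, levyIntegrandFDeriv ξ u ∂ν) ξ := by
  refine hasFDerivAt_integral_of_dominated_of_fderiv_le (Metric.ball_mem_nhds ξ one_pos)
    (Filter.Eventually.of_forall fun x => (continuous_levyIntegrand x).aestronglyMeasurable)
    (integrable_levyIntegrand hν ξ) (integrable_levyIntegrandFDeriv hν ξ).aestronglyMeasurable
    (bound := fun u => (‖ξ‖ + 2) * min ‖u‖ (‖u‖ ^ 2)) (ae_of_all _ fun u x hx => ?_)
    (hν.const_mul _) (ae_of_all _ fun u x _ => hasFDerivAt_levyIntegrand x u)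
  have hx' : ‖x‖ ≤ ‖ξ‖ + 1 := by
    have := norm_le_norm_add_norm_sub' x ξ
    rw [← dist_eq_norm] at this
    linarith [Metric.mem_ball.mp hx]
  refine (norm_levyIntegrandFDeriv_le x u).trans ?_
  gcongr
  exact max_le (by linarith [norm_nonneg ξ]) (by linarith)

lemma integral_cexp_inner_sub_one_mul_inner {α : ℝ} (hα : 1 < α)
    (hν : Integrable (fun u => min ‖u‖ (‖u‖ ^ 2)) ν)
    (hΦ : ∀ x, ∫ u, levyIntegrand x u ∂ν = ((-(‖x‖ ^ α / 2) : ℝ) : ℂ)) (ξ v : E) :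
    ∫ u, (cexp (⟪u, ξ⟫_ℝ * I) - 1) * ⟪u, v⟫_ℝ ∂ν =
      I * α / 2 * (‖ξ‖ ^ (α - 2) : ℝ) * ⟪ξ, v⟫_ℝ := by
  have hD := hasFDerivAt_integral_levyIntegrand hν ξ
  simp only [hΦ] at hD
  have hD' : HasFDerivAt (fun x : E => ((-(‖x‖ ^ α / 2) : ℝ) : ℂ))
      (ofRealCLM.comp ((-(1 / 2) : ℝ) • (α * ‖ξ‖ ^ (α - 2)) • innerSL ℝ ξ)) ξ := by
    refine ofRealCLM.hasFDerivAt.comp ξ ?_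
    convert HasFDerivAt.const_smul (hasFDerivAt_norm_rpow ξ hα) (-(1 / 2) : ℝ) using 1
    funext x
    show -(‖x‖ ^ α / 2) = _
    rw [Pi.smul_apply, smul_eq_mul]
    ring
  have hv := congrArg (· v) (hD.unique hD')
  have hI : ∫ u, (cexp (⟪u, ξ⟫_ℝ * I) - 1) * I * ⟪u, v⟫_ℝ ∂ν =
      (∫ u, (cexp (⟪u, ξ⟫_ℝ * I) - 1) * ⟪u, v⟫_ℝ ∂ν) * I := by
    rw [← integral_mul_const]
    congr 1 with u
    ring
  simp only [ContinuousLinearMap.integral_apply (integrable_levyIntegrandFDeriv hν ξ),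
    levyIntegrandFDeriv_apply, hI, ContinuousLinearMap.coe_comp, Function.comp_apply,
    smul_apply, innerSL_apply_apply, ofRealCLM_apply, smul_eq_mul] at hv
  push_cast at hv ⊢
  linear_combination -I * hv + (∫ u, (cexp (⟪u, ξ⟫_ℝ * I) - 1) * ⟪u, v⟫_ℝ ∂ν) * I_sq

end LevyIntegrand

lemma integral_levyIntegrand_eq_of_charFn {d : ℕ} {α : ℝ} {ν μ : Measure (Ed d)}
    (hsymm : Measure.map (fun u => -u) ν = ν) (hμ : IsStableOf d ν μ)
    (hrot : ∀ ξ : Ed d, charFn d μ ξ = cexp (-((‖ξ‖ ^ α / 2 : ℝ) : ℂ))) (ξ : Ed d) :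
    ∫ u, levyIntegrand ξ u ∂ν = ((-(‖ξ‖ ^ α / 2) : ℝ) : ℂ) := by
  refine eq_ofReal_of_conj_eq_of_exp_eq (conj_integral_levyIntegrand hsymm ξ) ?_
  rw [ofReal_neg, ← hrot, hμ.2 ξ]
  rfl

lemma norm_toC {d : ℕ} (u : Ed d) : ‖toC d u‖ = ‖u‖ := by
  simp [toC, EuclideanSpace.norm_eq]

@[fun_prop]
lemma continuous_toC (d : ℕ) : Continuous (toC d) := by
  unfold toC; fun_prop

theorem stmt2_general (d : ℕ) (α : ℝ) (hα1 : 1 < α)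
    (ν μ : Measure (Ed d)) (hν : IsStableLevy d α ν) (hμ : IsStableOf d ν μ)
    (hrot : ∀ ξ : Ed d, charFn d μ ξ = Complex.exp (-((‖ξ‖ ^ α / 2 : ℝ) : ℂ)))
    (ξ : Ed d) :
    (∫ u, (Complex.exp ((⟪u, ξ⟫_ℝ : ℂ) * Complex.I) - 1) • toC d u ∂ν) =
      ((Complex.I * (α : ℂ) / 2) * ((‖ξ‖ ^ (α - 2) : ℝ) : ℂ)) • toC d ξ := by
  have hmin := hν.integrable_min_norm_sq hα1
  have hint : Integrable (fun u => (cexp (⟪u, ξ⟫_ℝ * I) - 1) • toC d u) ν :=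
    (hmin.const_mul _).mono' (by fun_prop) (ae_of_all _ fun u => by
      rw [norm_smul, norm_toC]; exact norm_cexp_inner_sub_one_mul_norm_le ξ u)
  ext j
  have hcoord (u : Ed d) : (⟪u, EuclideanSpace.single j 1⟫_ℝ : ℂ) = toC d u j := by
    simp [toC, EuclideanSpace.inner_single_right]
  refine ((EuclideanSpace.proj (𝕜 := ℂ) j).integral_comp_comm hint).symm.trans ?_
  simpa [hcoord] using integral_cexp_inner_sub_one_mul_inner hα1 hmin
    (integral_levyIntegrand_eq_of_charFn hν.2.2.1 hμ hrot) ξ (EuclideanSpace.single j 1)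

theorem stmt2 (d : ℕ) (hd : 1 ≤ d) (α : ℝ) (hα1 : 1 < α) (hα2 : α < 2)
    (ν μ : Measure (Ed d)) (hν : IsStableLevy d α ν) (hμ : IsStableOf d ν μ)
    (hrot : ∀ ξ : Ed d, charFn d μ ξ = Complex.exp (-((‖ξ‖ ^ α / 2 : ℝ) : ℂ)))
    (ξ : Ed d) (hξ : ξ ≠ 0) :
    (∫ u, (Complex.exp ((⟪u, ξ⟫_ℝ : ℂ) * Complex.I) - 1) • toC d u ∂ν) =
      ((Complex.I * (α : ℂ) / 2) * ((‖ξ‖ ^ (α - 2) : ℝ) : ℂ)) • toC d ξ :=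
  stmt2_general d α hα1 ν μ hν hμ hrot ξ
end
end

section
/- Let d ≥ 1, α ∈ (1,2), let ν be a non-degenerate symmetric α-stable Lévy measure on ℝ^d and μ the associated α-stable probability measure. Assume μ has a Lebesgue density p_α, i.e. μ = p_α · (Lebesgue measure), where p_α : ℝ^d → ℝ is everywhere positive and continuously differentiable with ∫_{ℝ^d} ‖∇p_α(y)‖ dy < ∞. Then for every real-valued Schwartz function f on ℝ^d, every t > 0, every x ∈ ℝ^d and every j ∈ {1,…,d}, ∂_j(P_t^α f)(x) = t^{−1/α} ∫_{ℝ^d} f(x + t^{1/α} y) · (−∂_j p_α(y)/p_α(y)) μ(dy). -/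
noncomputable section

open MeasureTheory
open scoped InnerProductSpace
open scoped ENNReal BoundedContinuousFunction

/-!
Differentiating `∫ f (x + s • y) dμ(y)` under the integral sign puts the derivative on `f`.
Since `μ` has the density `pα`, integrating by parts in `y` moves it onto `pα`:
`∫ ∂ⱼ[f (x + s • ·)] dμ = ∫ f (x + s • y) (-∂ⱼ pα y / pα y) dμ(y)`, and the chain-rule factor
`s = t ^ (1/α)` on the left is cancelled by `t ^ (-(1/α))`.
-/

section WithDensity

variable {X : Type*} [MeasurableSpace X] {μ : Measure X} {p : X → ℝ}

theorem integral_withDensity_ofReal_eq_integral_mul (hp : Measurable p) (hp0 : ∀ x, 0 ≤ p x)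
    (h : X → ℝ) :
    ∫ x, h x ∂μ.withDensity (fun x => ENNReal.ofReal (p x)) = ∫ x, p x * h x ∂μ := by
  rw [integral_withDensity_eq_integral_toReal_smul hp.ennreal_ofReal
    (Filter.Eventually.of_forall fun _ => ENNReal.ofReal_lt_top)]
  simp only [ENNReal.toReal_ofReal (hp0 _), smul_eq_mul]

theorem integrable_of_isFiniteMeasure_withDensity_ofReal (hp : AEStronglyMeasurable p μ)
    (hp0 : 0 ≤ᵐ[μ] p) [IsFiniteMeasure (μ.withDensity fun x => ENNReal.ofReal (p x))] :
    Integrable p μ := by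
  refine (lintegral_ofReal_ne_top_iff_integrable hp hp0).1 ?_
  rw [← setLIntegral_univ, ← withDensity_apply _ MeasurableSet.univ]
  exact measure_ne_top _ _

end WithDensity

section ScoreFunction

variable {E : Type*} [NormedAddCommGroup E] [NormedSpace ℝ E] [FiniteDimensional ℝ E]
  [MeasurableSpace E] [BorelSpace E] {μ : Measure E} [μ.IsAddHaarMeasure]

theorem integral_fderiv_apply_withDensity_eq_integral_mul_score {p : E → ℝ}
    (hpos : ∀ y, 0 < p y) (hp : Differentiable ℝ p) (hp_int : Integrable p μ) {v : E}
    (hp'_int : Integrable (fun y => fderiv ℝ p y v) μ) {g : E → ℝ} (hg : Differentiable ℝ g)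
    {C C' : ℝ} (hC : ∀ y, ‖g y‖ ≤ C) (hC' : ∀ y, ‖fderiv ℝ g y v‖ ≤ C') :
    ∫ y, fderiv ℝ g y v ∂μ.withDensity (fun y => ENNReal.ofReal (p y)) =
      ∫ y, g y * (-(fderiv ℝ p y v) / p y) ∂μ.withDensity (fun y => ENNReal.ofReal (p y)) := by
  have hp_meas : Measurable p := hp.continuous.measurable
  have hg_meas : AEStronglyMeasurable g μ := hg.continuous.aestronglyMeasurable
  have hg'_meas : AEStronglyMeasurable (fun y => fderiv ℝ g y v) μ :=
    (measurable_fderiv_apply_const ℝ g v).aestronglyMeasurable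
  have hibp : ∫ y, g y * fderiv ℝ p y v ∂μ = -∫ y, fderiv ℝ g y v * p y ∂μ :=
    integral_mul_fderiv_eq_neg_fderiv_mul_of_integrable
      (hp_int.bdd_mul hg'_meas (.of_forall hC')) (hp'_int.bdd_mul hg_meas (.of_forall hC))
      (hp_int.bdd_mul hg_meas (.of_forall hC)) (fun y _ => hg y) (fun y _ => hp y)
  have hscore : ∀ y, p y * (g y * (-(fderiv ℝ p y v) / p y)) = -(g y * fderiv ℝ p y v) := by
    intro y
    field_simp [(hpos y).ne']
  simp only [integral_withDensity_ofReal_eq_integral_mul hp_meas (fun y => (hpos y).le), hscore,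
    integral_neg, hibp, neg_neg, mul_comm (p _)]

end ScoreFunction

section Translation

open scoped SchwartzMap

variable {E F : Type*} [NormedAddCommGroup E] [NormedSpace ℝ E] [NormedAddCommGroup F]
  [NormedSpace ℝ F]

theorem hasFDerivAt_comp_const_add_smul {f : E → F} {f' : E →L[ℝ] F} {x y : E} (s : ℝ)
    (hf : HasFDerivAt f f' (x + s • y)) :
    HasFDerivAt (fun y => f (x + s • y)) (s • f') y := by
  simpa [Function.comp_def] using hf.comp y (((hasFDerivAt_id y).const_smul s).const_add x)

theorem SchwartzMap.norm_fderiv_le_seminorm (f : 𝓢(E, F)) (x : E) :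
    ‖fderiv ℝ f x‖ ≤ SchwartzMap.seminorm ℝ 0 1 f := by
  simpa [norm_iteratedFDeriv_one] using SchwartzMap.le_seminorm ℝ 0 1 f x

variable {X : Type*} [MeasurableSpace X] (μ : Measure X) [IsFiniteMeasure μ]

theorem SchwartzMap.integrable_fderiv_comp_add (f : 𝓢(E, F)) {g : X → E}
    (hg : AEStronglyMeasurable g μ) (x : E) :
    Integrable (fun y => fderiv ℝ f (x + g y)) μ :=
  .of_bound ((f.smooth 1).continuous_fderiv one_ne_zero |>.comp_aestronglyMeasurable
    (aestronglyMeasurable_const.add hg)) _ (.of_forall fun _ => f.norm_fderiv_le_seminorm _)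

theorem SchwartzMap.hasFDerivAt_integral_comp_add (f : 𝓢(E, F)) {g : X → E}
    (hg : AEStronglyMeasurable g μ) (x : E) :
    HasFDerivAt (fun z => ∫ y, f (z + g y) ∂μ) (∫ y, fderiv ℝ f (x + g y) ∂μ) x :=
  hasFDerivAt_integral_of_dominated_of_fderiv_le (F' := fun z y => fderiv ℝ f (z + g y))
    (bound := fun _ => SchwartzMap.seminorm ℝ 0 1 f)
    Filter.univ_mem
    (.of_forall fun _ => f.continuous.comp_aestronglyMeasurable (aestronglyMeasurable_const.add hg))
    (.of_bound (f.continuous.comp_aestronglyMeasurable (aestronglyMeasurable_const.add hg)) _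
      (.of_forall fun _ => f.norm_le_seminorm ℝ _))
    (f.integrable_fderiv_comp_add μ hg x).aestronglyMeasurable
    (.of_forall fun _ _ _ => f.norm_fderiv_le_seminorm _) (integrable_const _)
    (.of_forall fun y _ _ => (hasFDerivAt_comp_add_right (g y)).2 (f.differentiableAt).hasFDerivAt)

theorem SchwartzMap.fderiv_integral_comp_add_apply (f : 𝓢(E, F)) {g : X → E}
    (hg : AEStronglyMeasurable g μ) (x v : E) :
    fderiv ℝ (fun z => ∫ y, f (z + g y) ∂μ) x v = ∫ y, fderiv ℝ f (x + g y) v ∂μ := by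
  rw [(f.hasFDerivAt_integral_comp_add μ hg x).fderiv,
    ContinuousLinearMap.integral_apply (f.integrable_fderiv_comp_add μ hg x)]

end Translation

theorem stmt10_general (d : ℕ) (α : ℝ)
    (ν μ : Measure (Ed d)) (hμ : IsStableOf d ν μ)
    (pα : Ed d → ℝ) (hpos : ∀ y, 0 < pα y) (hdiff : ContDiff ℝ 1 pα)
    (hgrad : Integrable (fun y => fderiv ℝ pα y) MeasureTheory.volume)
    (hdens : μ = MeasureTheory.volume.withDensity fun y => ENNReal.ofReal (pα y))
    (f : SchwartzMap (Ed d) ℝ) (t : ℝ) (ht : 0 < t) (x : Ed d) (j : Fin d) :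
    fderiv ℝ (fun z => heatSG d α μ t (⇑f) z) x (EuclideanSpace.single j 1) =
      t ^ (-(1/α)) * ∫ y, f (x + t ^ (1/α) • y) *
        (-(fderiv ℝ pα y (EuclideanSpace.single j 1)) / pα y) ∂μ := by
  set s := t ^ (1/α)
  set v : Ed d := EuclideanSpace.single j 1
  set g := fun y => f (x + s • y)
  have : IsProbabilityMeasure μ := hμ.1
  have hp : Differentiable ℝ pα := hdiff.differentiable one_ne_zero
  have hg (y : Ed d) : HasFDerivAt g (s • fderiv ℝ f (x + s • y)) y :=
    hasFDerivAt_comp_const_add_smul s f.differentiableAt.hasFDerivAt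
  have hg' (y : Ed d) : fderiv ℝ g y v = s * fderiv ℝ f (x + s • y) v := by
    simp [(hg y).fderiv]
  have hg'_le (y : Ed d) : ‖fderiv ℝ g y v‖ ≤ ‖s‖ * (SchwartzMap.seminorm ℝ 0 1 f * ‖v‖) := by
    rw [hg', norm_mul]
    gcongr
    exact (ContinuousLinearMap.le_opNorm _ v).trans (by gcongr; exact f.norm_fderiv_le_seminorm _)
  subst hdens
  have hp_int : Integrable pα := integrable_of_isFiniteMeasure_withDensity_ofReal
    hp.continuous.aestronglyMeasurable (.of_forall fun y => (hpos y).le)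
  rw [← integral_fderiv_apply_withDensity_eq_integral_mul_score hpos hp hp_int
    (hgrad.apply_continuousLinearMap v) (fun y => (hg y).differentiableAt)
    (fun y => f.norm_le_seminorm ℝ _) hg'_le,
    show heatSG d α _ t f = fun z => ∫ y, f (z + s • y) ∂_ from rfl,
    f.fderiv_integral_comp_add_apply _ (measurable_const_smul s).aestronglyMeasurable,
    funext hg', integral_const_mul, ← mul_assoc, ← Real.rpow_add ht, neg_add_cancel,
    Real.rpow_zero, one_mul]

theorem stmt10 (d : ℕ) (hd : 1 ≤ d) (α : ℝ) (hα1 : 1 < α) (hα2 : α < 2)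
    (ν μ : Measure (Ed d)) (hν : IsStableLevy d α ν) (hμ : IsStableOf d ν μ)
    (hnd : ∃ l1, IsSpectral d α l1 μ)
    (pα : Ed d → ℝ) (hpos : ∀ y, 0 < pα y) (hdiff : ContDiff ℝ 1 pα)
    (hgrad : Integrable (fun y => fderiv ℝ pα y) MeasureTheory.volume)
    (hdens : μ = MeasureTheory.volume.withDensity fun y => ENNReal.ofReal (pα y))
    (f : SchwartzMap (Ed d) ℝ) (t : ℝ) (ht : 0 < t) (x : Ed d) (j : Fin d) :
    fderiv ℝ (fun z => heatSG d α μ t (⇑f) z) x (EuclideanSpace.single j 1) =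
      t ^ (-(1/α)) * ∫ y, f (x + t ^ (1/α) • y) *
        (-(fderiv ℝ pα y (EuclideanSpace.single j 1)) / pα y) ∂μ :=
  stmt10_general d α ν μ hμ pα hpos hdiff hgrad hdens f t ht x j
end
end
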